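/- Let β = (x + y²(y+z²)², y+z², z) and π = (y,x,z) acting on K[x,y,z]. Then for all m ≥ 1, n ≥ 0, the polynomial obtained by applying β to x^m z^n, i.e. (x + y²(y+z²)²)^m z^n, lies in P_{m,n}^*: its support is contained in P_{m,n} = {(i,j,k) ∈ ℕ³ : 4i+j ≤ 4m, 4i+k ≤ 4m+n, 8i+2j+k ≤ 8m+n}, its leading exponent in the lex order with y > z > x is (0, 4m, n), and its leading exponent in the lex order with z > x > y is (0, 2m, 4m+n). -/

import Mathlib

open MvPolynomial

/-- Lexicographic key: `toLex (p, toLex (q, r))`. -/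
def lkey (p q r : ℕ) : ℕ ×ₗ (ℕ ×ₗ ℕ) := toLex (p, toLex (q, r))

variable {K : Type*} [Field K]

/-- `ldeg₂ P = (i,j,k)`: leading exponent in the lex order with `y > z > x`. -/
def HasLdeg2 (P : MvPolynomial (Fin 3) K) (i j k : ℕ) : Prop :=
  (∃ d ∈ P.support, d 0 = i ∧ d 1 = j ∧ d 2 = k) ∧
  ∀ d ∈ P.support, lkey (d 1) (d 2) (d 0) ≤ lkey j k i

/-- `ldeg₃ P = (i,j,k)`: leading exponent in the lex order with `z > x > y`. -/
def HasLdeg3 (P : MvPolynomial (Fin 3) K) (i j k : ℕ) : Prop :=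
  (∃ d ∈ P.support, d 0 = i ∧ d 1 = j ∧ d 2 = k) ∧
  ∀ d ∈ P.support, lkey (d 2) (d 0) (d 1) ≤ lkey k i j

/-!
The three inequalities cutting out `P_{m,n}` bound the weighted degrees of the exponents for the
weights `(4,1,0)`, `(4,0,1)` and `(8,2,1)`. Weighted total degree is subadditive on products,
`x + y²(y+z²)²` has weighted degree at most `4`, `4`, `8` and `z` has weight `0`, `1`, `1`.
For the two lexicographic orders, both realised as monomial orders, the leading exponent of a
product of nonzero polynomials over a field is the sum of the leading exponents, so it is `m`
times that of `x + y²(y+z²)²` (namely `y⁴`, resp. `y²z⁴`) plus that of `zⁿ`.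
-/

open MonomialOrder

noncomputable def lex3 (e : Equiv.Perm (Fin 3)) : MonomialOrder (Fin 3) where
  syn := ℕ ×ₗ (ℕ ×ₗ ℕ)
  toSyn :=
    { toFun d := lkey (d (e 0)) (d (e 1)) (d (e 2))
      invFun t := Finsupp.equivFunOnFinite.symm
        fun i => ![(ofLex t).1, (ofLex (ofLex t).2).1, (ofLex (ofLex t).2).2] (e.symm i)
      left_inv d := by
        ext i
        obtain ⟨j, rfl⟩ := e.surjective i
        fin_cases j <;> simp [lkey]
      right_inv t := by simp [lkey]
      map_add' _ _ := rfl }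
  toSyn_monotone _ _ h := Prod.Lex.toLex_mono ⟨h _, Prod.Lex.toLex_mono ⟨h _, h _⟩⟩

noncomputable def lexYZX : MonomialOrder (Fin 3) := lex3 (finRotate 3)

noncomputable def lexZXY : MonomialOrder (Fin 3) := lex3 (finRotate 3).symm

lemma lexYZX_lt_iff {d d' : Fin 3 →₀ ℕ} :
    d ≺[lexYZX] d' ↔ lkey (d 1) (d 2) (d 0) < lkey (d' 1) (d' 2) (d' 0) :=
  Iff.rfl

lemma lexZXY_lt_iff {d d' : Fin 3 →₀ ℕ} :
    d ≺[lexZXY] d' ↔ lkey (d 2) (d 0) (d 1) < lkey (d' 2) (d' 0) (d' 1) :=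
  Iff.rfl

lemma lkey_lt_iff {p q r p' q' r' : ℕ} :
    lkey p q r < lkey p' q' r' ↔ p < p' ∨ p = p' ∧ (q < q' ∨ q = q' ∧ r < r') := by
  simp [lkey, Prod.Lex.toLex_lt_toLex]

lemma hasLdeg2_of_degree_eq {P : MvPolynomial (Fin 3) K} (hP : P ≠ 0) {d : Fin 3 →₀ ℕ}
    (hd : lexYZX.degree P = d) : HasLdeg2 P (d 0) (d 1) (d 2) := by
  subst hd
  exact ⟨⟨_, degree_mem_support hP, rfl, rfl, rfl⟩, fun _ hd' => le_degree (m := lexYZX) hd'⟩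

lemma hasLdeg3_of_degree_eq {P : MvPolynomial (Fin 3) K} (hP : P ≠ 0) {d : Fin 3 →₀ ℕ}
    (hd : lexZXY.degree P = d) : HasLdeg3 P (d 0) (d 1) (d 2) := by
  subst hd
  exact ⟨⟨_, degree_mem_support hP, rfl, rfl, rfl⟩, fun _ hd' => le_degree (m := lexZXY) hd'⟩

lemma degree_pow_mul_X_pow {σ R : Type*} [CommRing R] [IsDomain R] (ord : MonomialOrder σ)
    {f : MvPolynomial σ R} (hf : f ≠ 0) (i : σ) (m n : ℕ) :
    ord.degree (f ^ m * X i ^ n) = m • ord.degree f + Finsupp.single i n := by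
  rw [degree_mul (pow_ne_zero _ hf) (pow_ne_zero _ (X_ne_zero _)), degree_pow, degree_pow,
    degree_X, Finsupp.smul_single, smul_eq_mul, mul_one]

section WeightedTotalDegree

variable {σ R M : Type*} [CommSemiring R] [AddCommMonoid M] [SemilatticeSup M] [OrderBot M]
  (w : σ → M)

lemma weightedTotalDegree_add_le (p q : MvPolynomial σ R) :
    weightedTotalDegree w (p + q) ≤ weightedTotalDegree w p ⊔ weightedTotalDegree w q :=
  AddMonoidAlgebra.sup_support_coeff_add_le _ p q

lemma weightedTotalDegree_X_le (i : σ) : weightedTotalDegree w (X i : MvPolynomial σ R) ≤ w i :=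
  Finset.sup_le fun _ hd => by
    rw [Finset.mem_singleton.mp (support_monomial_subset hd), Finsupp.weight_single, one_smul]

variable [IsOrderedAddMonoid M]

lemma weightedTotalDegree_mul_le (p q : MvPolynomial σ R) :
    weightedTotalDegree w (p * q) ≤ weightedTotalDegree w p + weightedTotalDegree w q :=
  AddMonoidAlgebra.sup_support_coeff_mul_le (fun a b => (map_add _ a b).le) p q

lemma weightedTotalDegree_pow_le (p : MvPolynomial σ R) (n : ℕ) :
    weightedTotalDegree w (p ^ n) ≤ n • weightedTotalDegree w p :=
  AddMonoidAlgebra.sup_support_pow_le (by simp) (fun a b => (map_add _ a b).le) n p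

end WeightedTotalDegree

/-- The image `xβ = x + y²(y+z²)²` of `x`, where `X 0, X 1, X 2` stand for `x, y, z`. -/
noncomputable def xBeta (K : Type*) [Field K] : MvPolynomial (Fin 3) K :=
  X 0 + X 1 ^ 2 * (X 1 + X 2 ^ 2) ^ 2

lemma degree_xBeta_lexYZX : lexYZX.degree (xBeta K) = Finsupp.single 1 4 := by
  have hyz : lexYZX.degree (X 1 + X 2 ^ 2 : MvPolynomial (Fin 3) K) = Finsupp.single 1 1 := by
    rw [degree_add_of_lt] <;> simp [degree_pow, degree_X, lexYZX_lt_iff, lkey_lt_iff]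
  have hyz0 : (X 1 + X 2 ^ 2 : MvPolynomial (Fin 3) K) ≠ 0 :=
    ne_zero_of_degree_ne_zero (m := lexYZX) (by simp [hyz])
  have htail : lexYZX.degree (X 1 ^ 2 * (X 1 + X 2 ^ 2) ^ 2 : MvPolynomial (Fin 3) K) =
      Finsupp.single 1 4 := by
    rw [degree_mul (pow_ne_zero _ (X_ne_zero _)) (pow_ne_zero _ hyz0), degree_pow, degree_pow,
      hyz, degree_X]
    ext i; fin_cases i <;> simp
  have hx : lexYZX.degree (X 0 : MvPolynomial (Fin 3) K) ≺[lexYZX] Finsupp.single 1 4 := by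
    rw [degree_X, lexYZX_lt_iff]
    simp [lkey_lt_iff]
  rw [xBeta, degree_add_eq_right_of_lt (htail ▸ hx), htail]

lemma degree_xBeta_lexZXY :
    lexZXY.degree (xBeta K) = Finsupp.single 1 2 + Finsupp.single 2 4 := by
  have hyz : lexZXY.degree (X 1 + X 2 ^ 2 : MvPolynomial (Fin 3) K) = Finsupp.single 2 2 := by
    rw [degree_add_eq_right_of_lt] <;> simp [degree_pow, degree_X, lexZXY_lt_iff, lkey_lt_iff]
  have hyz0 : (X 1 + X 2 ^ 2 : MvPolynomial (Fin 3) K) ≠ 0 :=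
    ne_zero_of_degree_ne_zero (m := lexZXY) (by simp [hyz])
  have htail : lexZXY.degree (X 1 ^ 2 * (X 1 + X 2 ^ 2) ^ 2 : MvPolynomial (Fin 3) K) =
      Finsupp.single 1 2 + Finsupp.single 2 4 := by
    rw [degree_mul (pow_ne_zero _ (X_ne_zero _)) (pow_ne_zero _ hyz0), degree_pow, degree_pow,
      hyz, degree_X]
    ext i; fin_cases i <;> simp
  have hx : lexZXY.degree (X 0 : MvPolynomial (Fin 3) K) ≺[lexZXY] Finsupp.single 1 2 + Finsupp.single 2 4 := by
    rw [degree_X, lexZXY_lt_iff]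
    simp [lkey_lt_iff]
  rw [xBeta, degree_add_eq_right_of_lt (htail ▸ hx), htail]

lemma xBeta_ne_zero : xBeta K ≠ 0 :=
  ne_zero_of_degree_ne_zero (m := lexYZX) (by simp [degree_xBeta_lexYZX])

lemma weightedTotalDegree_xBeta_le (w : Fin 3 → ℕ) :
    weightedTotalDegree w (xBeta K) ≤ w 0 ⊔ (2 * w 1 + 2 * (w 1 ⊔ 2 * w 2)) := by
  grw [xBeta, weightedTotalDegree_add_le, weightedTotalDegree_mul_le, weightedTotalDegree_pow_le,
    weightedTotalDegree_pow_le, weightedTotalDegree_add_le, weightedTotalDegree_pow_le,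
    weightedTotalDegree_X_le, weightedTotalDegree_X_le, weightedTotalDegree_X_le]
  simp only [smul_eq_mul, le_refl]

lemma weight_le_of_mem_support_xBeta_pow_mul_X_pow {w : Fin 3 → ℕ} {m n : ℕ} {d : Fin 3 →₀ ℕ}
    (hd : d ∈ (xBeta K ^ m * X 2 ^ n).support) :
    w 0 * d 0 + w 1 * d 1 + w 2 * d 2 ≤
      m * (w 0 ⊔ (2 * w 1 + 2 * (w 1 ⊔ 2 * w 2))) + n * w 2 := by
  have h := (le_weightedTotalDegree w hd).trans (weightedTotalDegree_mul_le w _ _)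
  grw [weightedTotalDegree_pow_le, weightedTotalDegree_pow_le, weightedTotalDegree_xBeta_le,
    weightedTotalDegree_X_le] at h
  simpa [Finsupp.weight_eq_sum, Fin.sum_univ_three, mul_comm] using h

lemma bounds_of_mem_support_xBeta_pow_mul_X_pow {m n : ℕ} {d : Fin 3 →₀ ℕ}
    (hd : d ∈ (xBeta K ^ m * X 2 ^ n).support) :
    4 * d 0 + d 1 ≤ 4 * m ∧ 4 * d 0 + d 2 ≤ 4 * m + n ∧ 8 * d 0 + 2 * d 1 + d 2 ≤ 8 * m + n := by
  have h₁ := weight_le_of_mem_support_xBeta_pow_mul_X_pow (w := ![4, 1, 0]) hd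
  have h₂ := weight_le_of_mem_support_xBeta_pow_mul_X_pow (w := ![4, 0, 1]) hd
  have h₃ := weight_le_of_mem_support_xBeta_pow_mul_X_pow (w := ![8, 2, 1]) hd
  simp only [Fin.isValue, Matrix.cons_val_zero, Matrix.cons_val_one, one_mul, Matrix.cons_val,
    zero_mul, add_zero, mul_one, mul_zero, _root_.zero_le, sup_of_le_left, Nat.reduceAdd, max_self,
    sup_of_le_right, Nat.reduceMul, zero_add] at h₁ h₂ h₃
  omega

theorem xmzn_beta_in_Pstar_general (m n : ℕ) :
    let Q : MvPolynomial (Fin 3) K :=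
      (X 0 + (X 1) ^ 2 * (X 1 + (X 2) ^ 2) ^ 2) ^ m * (X 2) ^ n
    (∀ d ∈ Q.support,
        4 * d 0 + d 1 ≤ 4 * m ∧ 4 * d 0 + d 2 ≤ 4 * m + n ∧
        8 * d 0 + 2 * d 1 + d 2 ≤ 8 * m + n) ∧
    HasLdeg2 Q 0 (4 * m) n ∧ HasLdeg3 Q 0 (2 * m) (4 * m + n) := by
  intro Q
  have hQ : Q ≠ 0 := mul_ne_zero (pow_ne_zero _ xBeta_ne_zero) (pow_ne_zero _ (X_ne_zero _))
  refine ⟨fun d hd => bounds_of_mem_support_xBeta_pow_mul_X_pow hd, ?_, ?_⟩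
  · have h := hasLdeg2_of_degree_eq hQ (degree_pow_mul_X_pow lexYZX xBeta_ne_zero 2 m n)
    rw [degree_xBeta_lexYZX] at h
    simpa [mul_comm] using h
  · have h := hasLdeg3_of_degree_eq hQ (degree_pow_mul_X_pow lexZXY xBeta_ne_zero 2 m n)
    rw [degree_xBeta_lexZXY] at h
    simpa [mul_comm] using h

/-- The polynomial `(x^m z^n)β = (x + y²(y+z²)²)^m z^n` lies in `P*_{m,n}`. -/
theorem xmzn_beta_in_Pstar (m n : ℕ) (hm : 1 ≤ m) :
    let Q : MvPolynomial (Fin 3) K :=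
      (X 0 + (X 1) ^ 2 * (X 1 + (X 2) ^ 2) ^ 2) ^ m * (X 2) ^ n
    (∀ d ∈ Q.support,
        4 * d 0 + d 1 ≤ 4 * m ∧ 4 * d 0 + d 2 ≤ 4 * m + n ∧
        8 * d 0 + 2 * d 1 + d 2 ≤ 8 * m + n) ∧
    HasLdeg2 Q 0 (4 * m) n ∧ HasLdeg3 Q 0 (2 * m) (4 * m + n) :=
  xmzn_beta_in_Pstar_general m n
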